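/- arXiv:1002.0011 — 2 statements merged into one kernel-verified Lean document; each statement's English description precedes it below -/
import Mathlib

section
/- (Integral inequality for oscillation bounds) Let f : [a,b] → ℝ be C² with f(a) = f(b) = 0, f not identically zero, having exactly n interior zeros, and suppose f''/f extends continuously to [a,b]. Then for ρ = π (b−a)²/((n+1)² e²) one has ∫ₐᵇ exp(−ρ f''(z)/f(z)) dz ≥ (n+1) e √(ρπ). More generally, there exists ρ > 0 such that ∫ₐᵇ exp(−ρ f''(z)/f(z)) dz ≥ (n+1) e √(ρπ). -/
/-!
On a nodal interval `(c, d)` where, say, `f > 0` with maximum `M = f m`, the mean value theorem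
gives points `ξ < m < η` with `f' ξ = M / (m - c)` and `f' η = -M / (d - m)`. Since
`-f'' ≤ (-f''/f)⁺ f ≤ (-f''/f)⁺ M`, integrating `f''` from `ξ` to `η` yields Lyapunov's inequality
`4 / (d - c) ≤ 1 / (m - c) + 1 / (d - m) ≤ ∫_c^d (-f''/f)⁺`.
Summing over the `n + 1` nodal intervals, the Cauchy–Schwarz inequality
`(p + q)² / (x + y) ≤ p² / x + q² / y` gives `∫_a^b (-g)⁺ ≥ 4 (n + 1)² / (b - a)`.
Finally `e t⁺ ≤ exp t` gives `∫ exp (-ρ g) ≥ e ρ ∫ (-g)⁺ ≥ 4 π (b - a) / e`, which exceeds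
`π (b - a) = (n + 1) e √(ρ π)` because `e < 4`.
-/

open Real Set MeasureTheory intervalIntegral

theorem add_sq_div_add_le {p q x y : ℝ} (hx : 0 < x) (hy : 0 < y) :
    (p + q) ^ 2 / (x + y) ≤ p ^ 2 / x + q ^ 2 / y := by
  simpa [Fin.sum_univ_two] using Finset.sq_sum_div_le_sum_sq_div Finset.univ ![p, q]
    (g := ![x, y]) (by simp [Fin.forall_fin_two, hx, hy])

theorem IsPreconnected.pos_or_neg_of_ne_zero {s : Set ℝ} {f : ℝ → ℝ} (hs : IsPreconnected s)
    (hf : ContinuousOn f s) (hne : ∀ x ∈ s, f x ≠ 0) :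
    (∀ x ∈ s, 0 < f x) ∨ ∀ x ∈ s, f x < 0 := by
  by_contra! h
  obtain ⟨⟨x, hx, hfx⟩, ⟨y, hy, hfy⟩⟩ := h
  obtain ⟨z, hz, hfz⟩ := hs.intermediate_value hx hy hf ⟨hfx, hfy⟩
  exact hne z hz hfz

theorem exp_one_mul_max_le_exp (t : ℝ) : exp 1 * max t 0 ≤ exp t := by
  rw [mul_max_of_nonneg _ _ (exp_pos 1).le, mul_zero]
  exact max_le exp_one_mul_le_exp (exp_pos t).le

theorem lyapunov_of_pos {f q : ℝ → ℝ} {c d : ℝ} (hcd : c < d) (hf : ContDiff ℝ 2 f)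
    (hc : f c = 0) (hd : f d = 0) (hpos : ∀ z ∈ Ioo c d, 0 < f z)
    (hq : IntervalIntegrable q volume c d) (hq0 : ∀ z ∈ Icc c d, 0 ≤ q z)
    (hfq : ∀ z ∈ Ioo c d, -(q z * f z) ≤ deriv (deriv f) z) :
    4 / (d - c) ≤ ∫ z in c..d, q z := by
  obtain ⟨hfd, -, hf'⟩ := contDiff_succ_iff_deriv.mp (show ContDiff ℝ (1 + 1) f from hf)
  obtain ⟨hf'd, -, hf''⟩ :=
    contDiff_succ_iff_deriv.mp (show ContDiff ℝ (0 + 1) (deriv f) from hf')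
  have hf''i : ∀ u v, IntervalIntegrable (deriv (deriv f)) volume u v :=
    hf''.continuous.intervalIntegrable
  obtain ⟨m, hm, hmax⟩ := isCompact_Icc.exists_isMaxOn (nonempty_Icc.2 hcd.le)
    hfd.continuous.continuousOn
  have hmid : (c + d) / 2 ∈ Ioo c d := ⟨by linarith, by linarith⟩
  have hM : 0 < f m := (hpos _ hmid).trans_le (hmax (Ioo_subset_Icc_self hmid))
  have hcm : c < m := hm.1.lt_of_ne (by rintro rfl; linarith)
  have hmd : m < d := hm.2.lt_of_ne (by rintro rfl; linarith)
  obtain ⟨ξ, hξ, hfξ⟩ :=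
    exists_deriv_eq_slope f hcm hfd.continuous.continuousOn hfd.differentiableOn
  obtain ⟨η, hη, hfη⟩ :=
    exists_deriv_eq_slope f hmd hfd.continuous.continuousOn hfd.differentiableOn
  have hξη : ξ ≤ η := (hξ.2.trans hη.1).le
  have hIcc : Icc ξ η ⊆ Ioo c d := Icc_subset_Ioo hξ.1 hη.2
  have hslopes : deriv f ξ - deriv f η ≤ f m * ∫ z in c..d, q z :=
    calc deriv f ξ - deriv f η = ∫ z in ξ..η, -deriv (deriv f) z := by
          rw [intervalIntegral.integral_neg, integral_deriv_eq_sub (fun x _ ↦ hf'd x) (hf''i _ _)]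
          ring
      _ ≤ ∫ z in ξ..η, f m * q z := by
          refine integral_mono_on hξη (hf''i _ _).neg ((hq.mono_set ?_).const_mul _)
            fun z hz ↦ ?_
          · rw [uIcc_of_le hξη, uIcc_of_le hcd.le]
            exact hIcc.trans Ioo_subset_Icc_self
          · have hz' := Ioo_subset_Icc_self (hIcc hz)
            nlinarith [hfq z (hIcc hz),
              mul_le_mul_of_nonneg_left (hmax hz' : f z ≤ f m) (hq0 z hz')]
      _ ≤ f m * ∫ z in c..d, q z := by
          rw [intervalIntegral.integral_const_mul]
          gcongr
          exact integral_mono_interval hξ.1.le hξη hη.2.le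
            ((ae_restrict_mem measurableSet_Ioc).mono fun z hz ↦ hq0 z (Ioc_subset_Icc_self hz))
            hq
  rw [hfξ, hfη, hc, hd] at hslopes
  calc 4 / (d - c) = (1 + 1) ^ 2 / ((m - c) + (d - m)) := by ring_nf
    _ ≤ 1 ^ 2 / (m - c) + 1 ^ 2 / (d - m) := add_sq_div_add_le (by linarith) (by linarith)
    _ ≤ ∫ z in c..d, q z := by
      refine le_of_mul_le_mul_left (hslopes.trans_eq' ?_) hM
      ring

theorem lyapunov_of_ne_zero {f g : ℝ → ℝ} {c d : ℝ} (hcd : c < d) (hf : ContDiff ℝ 2 f)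
    (hc : f c = 0) (hd : f d = 0) (hne : ∀ z ∈ Ioo c d, f z ≠ 0)
    (hg : ContinuousOn g (Icc c d)) (hfg : ∀ z ∈ Ioo c d, deriv (deriv f) z = g z * f z) :
    4 / (d - c) ≤ ∫ z in c..d, max (-g z) 0 := by
  have hq : IntervalIntegrable (fun z ↦ max (-g z) 0) volume c d :=
    (hg.neg.sup continuousOn_const).intervalIntegrable_of_Icc hcd.le
  have hq0 : ∀ z ∈ Icc c d, 0 ≤ max (-g z) 0 := fun z _ ↦ le_max_right _ _
  rcases isPreconnected_Ioo.pos_or_neg_of_ne_zero hf.continuous.continuousOn hne with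
    hpos | hneg
  · refine lyapunov_of_pos hcd hf hc hd hpos hq hq0 fun z hz ↦ ?_
    rw [hfg z hz, ← neg_mul]
    exact mul_le_mul_of_nonneg_right (neg_le.mp (le_max_left _ _)) (hpos z hz).le
  · refine lyapunov_of_pos hcd hf.neg (by simp [hc]) (by simp [hd])
      (fun z hz ↦ neg_pos.mpr (hneg z hz)) hq hq0 fun z hz ↦ ?_
    rw [deriv.fun_neg', deriv.fun_neg, hfg z hz, mul_neg, neg_neg, ← neg_mul]
    exact mul_le_mul_of_nonpos_right (le_max_left _ _) (hneg z hz).le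

theorem lyapunov_of_finite_zeros {f g : ℝ → ℝ} {a b : ℝ} (hab : a < b)
    (hf : ContDiff ℝ 2 f) (ha : f a = 0) (hb : f b = 0) {Z : Finset ℝ} (hsub : ↑Z ⊆ Ioo a b)
    (hzeros : ∀ z ∈ Ioo a b, f z = 0 ↔ z ∈ Z) (hg : ContinuousOn g (Icc a b))
    (hfg : ∀ z ∈ Ioo a b, f z ≠ 0 → deriv (deriv f) z = g z * f z) :
    4 * ((Z.card : ℝ) + 1) ^ 2 / (b - a) ≤ ∫ z in a..b, max (-g z) 0 := by
  induction Z using Finset.induction_on_max generalizing b with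
  | empty =>
    have hne : ∀ z ∈ Ioo a b, f z ≠ 0 := fun z hz h ↦ by simpa using (hzeros z hz).mp h
    simpa using lyapunov_of_ne_zero hab hf ha hb hne hg fun z hz ↦ hfg z hz (hne z hz)
  | insert z Z hlt ih =>
    have hzZ : z ∉ Z := fun h ↦ (hlt z h).false
    have hz : z ∈ Ioo a b := hsub (Finset.mem_insert_self z Z)
    have hfz : f z = 0 := (hzeros z hz).mpr (Finset.mem_insert_self z Z)
    have hleft : 4 * ((Z.card : ℝ) + 1) ^ 2 / (z - a) ≤ ∫ w in a..z, max (-g w) 0 := by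
      refine ih hz.1 hfz (fun w hw ↦ ⟨(hsub (Finset.mem_insert_of_mem hw)).1, hlt w hw⟩)
        (fun w hw ↦ ?_) (hg.mono (Icc_subset_Icc_right hz.2.le))
        fun w hw ↦ hfg w ⟨hw.1, hw.2.trans hz.2⟩
      rw [hzeros w ⟨hw.1, hw.2.trans hz.2⟩, Finset.mem_insert, or_iff_right hw.2.ne]
    have hne : ∀ w ∈ Ioo z b, f w ≠ 0 := fun w hw hfw ↦ by
      rcases Finset.mem_insert.mp ((hzeros w ⟨hz.1.trans hw.1, hw.2⟩).mp hfw) with rfl | hwZ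
      · exact hw.1.false
      · exact (hlt w hwZ).not_gt hw.1
    have hright : 4 / (b - z) ≤ ∫ w in z..b, max (-g w) 0 :=
      lyapunov_of_ne_zero hz.2 hf hfz hb hne (hg.mono (Icc_subset_Icc_left hz.1.le))
        fun w hw ↦ hfg w ⟨hz.1.trans hw.1, hw.2⟩ (hne w hw)
    have hq : ContinuousOn (fun w ↦ max (-g w) 0) (Icc a b) := hg.neg.sup continuousOn_const
    rw [← integral_add_adjacent_intervals
      ((hq.mono (Icc_subset_Icc_right hz.2.le)).intervalIntegrable_of_Icc hz.1.le)
      ((hq.mono (Icc_subset_Icc_left hz.1.le)).intervalIntegrable_of_Icc hz.2.le),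
      Finset.card_insert_of_notMem hzZ]
    calc 4 * (((Z.card + 1 : ℕ) : ℝ) + 1) ^ 2 / (b - a)
        = 4 * ((((Z.card : ℝ) + 1) + 1) ^ 2 / ((z - a) + (b - z))) := by push_cast; ring_nf
      _ ≤ 4 * (((Z.card : ℝ) + 1) ^ 2 / (z - a) + 1 ^ 2 / (b - z)) := by
        gcongr
        exact add_sq_div_add_le (by linarith [hz.1]) (by linarith [hz.2])
      _ = 4 * ((Z.card : ℝ) + 1) ^ 2 / (z - a) + 4 / (b - z) := by ring
      _ ≤ _ := add_le_add hleft hright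

theorem exp_one_mul_integral_le_integral_exp {g : ℝ → ℝ} {a b ρ : ℝ} (hab : a ≤ b)
    (hg : ContinuousOn g (Icc a b)) (hρ : 0 ≤ ρ) :
    exp 1 * ρ * ∫ z in a..b, max (-g z) 0 ≤ ∫ z in a..b, exp (-ρ * g z) := by
  rw [← intervalIntegral.integral_const_mul]
  refine integral_mono_on hab
    ((continuousOn_const.mul (hg.neg.sup continuousOn_const)).intervalIntegrable_of_Icc hab)
    ((continuous_exp.comp_continuousOn (hg.const_smul (-ρ))).intervalIntegrable_of_Icc hab)
    fun z _ ↦ ?_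
  calc exp 1 * ρ * max (-g z) 0 = exp 1 * max (-ρ * g z) 0 := by
        rw [mul_assoc, mul_max_of_nonneg _ _ hρ, mul_zero, neg_mul_comm]
    _ ≤ exp (-ρ * g z) := exp_one_mul_max_le_exp _

theorem stmt7_general (a b : ℝ) (hab : a < b) (n : ℕ) (f g : ℝ → ℝ)
    (hf : ContDiff ℝ 2 f) (hbca : f a = 0) (hbcb : f b = 0)
    (Z : Finset ℝ) (hZsub : ↑Z ⊆ Set.Ioo a b) (hZcard : Z.card = n)
    (hZzeros : ∀ z ∈ Set.Ioo a b, f z = 0 ↔ z ∈ Z)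
    (hg : ContinuousOn g (Set.Icc a b))
    (hgval : ∀ z ∈ Set.Icc a b, f z ≠ 0 → g z = deriv (deriv f) z / f z) :
    ((n + 1 : ℝ) * exp 1 * Real.sqrt ((π * (b - a)^2 / ((n + 1 : ℝ)^2 * (exp 1)^2)) * π)
        ≤ ∫ z in a..b, exp (-(π * (b - a)^2 / ((n + 1 : ℝ)^2 * (exp 1)^2)) * g z)) ∧
    ∃ ρ : ℝ, 0 < ρ ∧
      (n + 1 : ℝ) * exp 1 * Real.sqrt (ρ * π) ≤ ∫ z in a..b, exp (-ρ * g z) := by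
  set N : ℝ := n + 1
  set ρ : ℝ := π * (b - a) ^ 2 / (N ^ 2 * exp 1 ^ 2) with hρdef
  have hN0 : 0 < N := by positivity
  have hL : 0 < b - a := sub_pos.mpr hab
  have hρ : 0 < ρ := by positivity
  have hsqrt : N * exp 1 * √(ρ * π) = π * (b - a) := by
    rw [show ρ * π = (π * (b - a) / (N * exp 1)) ^ 2 by rw [hρdef]; field_simp,
      sqrt_sq (by positivity)]
    field_simp
  have hnodal : 4 * N ^ 2 / (b - a) ≤ ∫ z in a..b, max (-g z) 0 := by
    have := lyapunov_of_finite_zeros hab hf hbca hbcb hZsub hZzeros hg fun z hz hfz ↦ by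
      rw [hgval z (Ioo_subset_Icc_self hz) hfz, div_mul_cancel₀ _ hfz]
    rwa [hZcard] at this
  have hbound : N * exp 1 * √(ρ * π) ≤ ∫ z in a..b, exp (-ρ * g z) :=
    calc N * exp 1 * √(ρ * π) = π * (b - a) := hsqrt
      _ ≤ 4 * π * (b - a) / exp 1 := by
        rw [le_div_iff₀ (exp_pos 1)]
        nlinarith [exp_one_lt_three, mul_pos pi_pos hL]
      _ = exp 1 * ρ * (4 * N ^ 2 / (b - a)) := by rw [hρdef]; field_simp
      _ ≤ exp 1 * ρ * ∫ z in a..b, max (-g z) 0 := by gcongr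
      _ ≤ _ := exp_one_mul_integral_le_integral_exp hab.le hg hρ.le
  exact ⟨hbound, ρ, hρ, hbound⟩

/-- Integral inequality for oscillation bounds: if `f` is `C²` on `[a,b]`,
vanishes at the endpoints, is not identically zero, has exactly `n` interior
zeros, and `f''/f` extends continuously (as `g`) to `[a,b]`, then for
`ρ = π (b-a)²/((n+1)² e²)` one has
`∫ₐᵇ exp(-ρ f''/f) dz ≥ (n+1) e √(ρπ)`; more generally there exists `ρ > 0`
for which this inequality holds. -/
theorem stmt7 (a b : ℝ) (hab : a < b) (n : ℕ) (f g : ℝ → ℝ)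
    (hf : ContDiff ℝ 2 f) (hbca : f a = 0) (hbcb : f b = 0)
    (hnontriv : ∃ z ∈ Set.Icc a b, f z ≠ 0)
    (Z : Finset ℝ) (hZsub : ↑Z ⊆ Set.Ioo a b) (hZcard : Z.card = n)
    (hZzeros : ∀ z ∈ Set.Ioo a b, f z = 0 ↔ z ∈ Z)
    (hg : ContinuousOn g (Set.Icc a b))
    (hgval : ∀ z ∈ Set.Icc a b, f z ≠ 0 → g z = deriv (deriv f) z / f z) :
    ((n + 1 : ℝ) * exp 1 * Real.sqrt ((π * (b - a)^2 / ((n + 1 : ℝ)^2 * (exp 1)^2)) * π)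
        ≤ ∫ z in a..b, exp (-(π * (b - a)^2 / ((n + 1 : ℝ)^2 * (exp 1)^2)) * g z)) ∧
    ∃ ρ : ℝ, 0 < ρ ∧
      (n + 1 : ℝ) * exp 1 * Real.sqrt (ρ * π) ≤ ∫ z in a..b, exp (-ρ * g z) :=
  stmt7_general a b hab n f g hf hbca hbcb Z hZsub hZcard hZzeros hg hgval
end

section
/- (Sufficient stability condition) Let Q : [a,b] → ℝ be continuous and suppose the lowest Dirichlet eigenvalue m₀² of v'' = (Q − m²)v on [a,b] exists with nodeless eigenfunction v₀ > 0 on (a,b). If there exists ρ > 0 with ∫ₐᵇ e^{−ρ Q(z)} dz ≤ e√(ρπ), then m₀² ≥ 0. -/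
/-!
The logarithmic derivative `w = v₀' / v₀` solves the Riccati equation `w' = Q - m₀² - w²` on
`(a, b)`, and it runs from `+∞` at `a` to `-∞` at `b` because `v₀` vanishes at both ends.
Substituting `u = w z` in the Gaussian integral and using `e x ≤ eˣ` pointwise gives
`e ρ ∫_{w t}^{w s} e^{-ρu²} du ≤ e^{ρ m₀²} ∫ₛᵗ e^{-ρ Q}` for `a < s ≤ t < b`. Letting `s → a`,
`t → b` yields `e √(ρπ) ≤ e^{ρ m₀²} ∫ₐᵇ e^{-ρ Q} ≤ e^{ρ m₀²} e √(ρπ)`, hence `m₀² ≥ 0`.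
-/

open Real Filter Topology Set MeasureTheory

theorem frequently_lt_logDeriv_nhdsGT {f : ℝ → ℝ} {a : ℝ} (hf : Tendsto f (𝓝[>] a) (𝓝 0))
    (hpos : ∀ᶠ z in 𝓝[>] a, 0 < f z) (hdiff : ∀ᶠ z in 𝓝[>] a, DifferentiableAt ℝ f z) (M : ℝ) :
    ∃ᶠ z in 𝓝[>] a, M < logDeriv f z := by
  by_contra h
  rw [not_frequently] at h
  obtain ⟨c, hac, hc⟩ := mem_nhdsGT_iff_exists_Ioo_subset.mp (hpos.and (hdiff.and h))
  set g : ℝ → ℝ := fun z => log (f z) - z * M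
  have hg : ∀ z ∈ Ioo a c, HasDerivAt g (logDeriv f z - M) z := fun z hz => by
    obtain ⟨hfz, hdz, -⟩ := hc hz
    rw [logDeriv_apply]
    exact (hdz.hasDerivAt.log hfz.ne').fun_sub (hasDerivAt_mul_const M)
  have hanti : AntitoneOn g (Ioo a c) := by
    refine antitoneOn_of_deriv_nonpos (convex_Ioo a c)
      (fun z hz => (hg z hz).continuousAt.continuousWithinAt)
      (fun z hz => (hg z (interior_subset hz)).differentiableAt.differentiableWithinAt)
      fun z hz => ?_
    rw [interior_Ioo] at hz
    rw [(hg z hz).deriv]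
    linarith [not_lt.mp (hc hz).2.2]
  obtain ⟨d, hd⟩ := nonempty_Ioo.mpr (mem_Ioi.mp hac)
  have hlow : ∀ᶠ z in 𝓝[>] a, g d ≤ g z :=
    mem_of_superset (Ioo_mem_nhdsGT hd.1) fun z hz => hanti ⟨hz.1, hz.2.trans hd.2⟩ hd hz.2.le
  have hbot : Tendsto g (𝓝[>] a) atBot :=
    (tendsto_log_nhdsGT_zero.comp (tendsto_nhdsWithin_iff.mpr ⟨hf, hpos⟩)).atBot_add
      (((continuous_mul_const M).neg.tendsto a).mono_left nhdsWithin_le_nhds)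
  obtain ⟨z, hle, hlt⟩ := (hlow.and (hbot.eventually_lt_atBot (g d))).exists
  exact hle.not_gt hlt

theorem frequently_logDeriv_lt_nhdsLT {f : ℝ → ℝ} {b : ℝ} (hf : Tendsto f (𝓝[<] b) (𝓝 0))
    (hpos : ∀ᶠ z in 𝓝[<] b, 0 < f z) (hdiff : ∀ᶠ z in 𝓝[<] b, DifferentiableAt ℝ f z) (M : ℝ) :
    ∃ᶠ z in 𝓝[<] b, logDeriv f z < M := by
  have hneg : Tendsto Neg.neg (𝓝[>] (-b)) (𝓝[<] b) := tendsto_neg_nhdsGT_neg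
  have hdiff' := hneg.eventually hdiff
  have := frequently_lt_logDeriv_nhdsGT (f := f ∘ Neg.neg) (hf.comp hneg) (hneg.eventually hpos)
    (hdiff'.mono fun z hz => hz.comp z (hasDerivAt_neg z).differentiableAt) (-M)
  refine hneg.frequently ((this.and_eventually hdiff').mono fun z ⟨hlt, hz⟩ => ?_)
  rw [logDeriv_comp hz (hasDerivAt_neg z).differentiableAt] at hlt
  simp only [deriv_neg'', mul_neg, mul_one] at hlt
  linarith

theorem hasDerivAt_logDeriv {𝕜 : Type*} [NontriviallyNormedField 𝕜] {v : 𝕜 → 𝕜}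
    (hv : ContDiff 𝕜 2 v) {z : 𝕜} (hz : v z ≠ 0) :
    HasDerivAt (logDeriv v) (deriv (deriv v) z / v z - logDeriv v z ^ 2) z := by
  have h1 : HasDerivAt v (deriv v z) z := (hv.differentiable two_ne_zero z).hasDerivAt
  have h2 : HasDerivAt (deriv v) (deriv (deriv v) z) z :=
    (hv.differentiable_deriv_two z).hasDerivAt
  rw [show logDeriv v = deriv v / v from rfl, Pi.div_apply]
  refine (h2.div h1 hz).congr_deriv ?_
  field_simp

theorem mul_intervalIntegral_gaussian_le_of_riccati {q w : ℝ → ℝ} {s t : ℝ} (ρ : ℝ) (hst : s ≤ t)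
    (hq : ContinuousOn q (Icc s t)) (hw : ∀ z ∈ Icc s t, HasDerivAt w (q z - w z ^ 2) z) :
    exp 1 * ρ * ∫ u in w t..w s, exp (-ρ * u ^ 2) ≤ ∫ z in s..t, exp (-ρ * q z) := by
  have hwc : ContinuousOn w (Icc s t) := fun z hz => (hw z hz).continuousAt.continuousWithinAt
  have hgc : Continuous fun u : ℝ => exp (-ρ * u ^ 2) := by fun_prop
  have hsubst := intervalIntegral.integral_comp_mul_deriv (by rwa [uIcc_of_le hst])
    (by rw [uIcc_of_le hst]; exact hq.sub (hwc.pow 2)) hgc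
  rw [intervalIntegral.integral_symm, ← hsubst, ← intervalIntegral.integral_neg,
    ← intervalIntegral.integral_const_mul]
  refine intervalIntegral.integral_mono_on hst ?_ ?_ fun z hz => ?_
  · refine ContinuousOn.intervalIntegrable ?_
    rw [uIcc_of_le hst]
    exact continuousOn_const.mul ((hgc.comp_continuousOn hwc).mul (hq.sub (hwc.pow 2))).neg
  · refine ContinuousOn.intervalIntegrable ?_
    rw [uIcc_of_le hst]
    exact continuous_exp.comp_continuousOn (continuousOn_const.mul hq)
  · calc exp 1 * ρ * -(((fun u => exp (-ρ * u ^ 2)) ∘ w) z * (q z - w z ^ 2))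
        = exp 1 * (ρ * (w z ^ 2 - q z)) * exp (-ρ * w z ^ 2) := by
          simp only [Function.comp_apply]; ring
      _ ≤ exp (ρ * (w z ^ 2 - q z)) * exp (-ρ * w z ^ 2) :=
          mul_le_mul_of_nonneg_right exp_one_mul_le_exp (exp_pos _).le
      _ = exp (-ρ * q z) := by rw [← exp_add]; ring_nf

theorem mul_intervalIntegral_gaussian_le_of_riccati_of_blowup {q w : ℝ → ℝ} {a b ρ R : ℝ}
    (hab : a < b) (hρ : 0 ≤ ρ) (hR : 0 ≤ R) (hq : ContinuousOn q (Icc a b))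
    (hw : ∀ z ∈ Ioo a b, HasDerivAt w (q z - w z ^ 2) z)
    (hwa : ∃ᶠ z in 𝓝[>] a, R < w z) (hwb : ∃ᶠ z in 𝓝[<] b, w z < -R) :
    exp 1 * ρ * ∫ u in -R..R, exp (-ρ * u ^ 2) ≤ ∫ z in a..b, exp (-ρ * q z) := by
  obtain ⟨c, hac, hcb⟩ := exists_between hab
  obtain ⟨s, hRs, hs⟩ := (hwa.and_eventually (Ioo_mem_nhdsGT hac)).exists
  obtain ⟨t, htR, ht⟩ := (hwb.and_eventually (Ioo_mem_nhdsLT hcb)).exists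
  have hst : s ≤ t := (hs.2.trans ht.1).le
  have hgc : Continuous fun u : ℝ => exp (-ρ * u ^ 2) := by fun_prop
  calc exp 1 * ρ * ∫ u in -R..R, exp (-ρ * u ^ 2)
      ≤ exp 1 * ρ * ∫ u in w t..w s, exp (-ρ * u ^ 2) := by
        gcongr
        exact intervalIntegral.integral_mono_interval htR.le (by linarith) hRs.le
          (Eventually.of_forall fun u => (exp_pos _).le) (hgc.intervalIntegrable _ _)
    _ ≤ ∫ z in s..t, exp (-ρ * q z) :=
        mul_intervalIntegral_gaussian_le_of_riccati ρ hst
          (hq.mono (Icc_subset_Icc hs.1.le ht.2.le))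
          fun z hz => hw z ⟨hs.1.trans_le hz.1, hz.2.trans_lt ht.2⟩
    _ ≤ ∫ z in a..b, exp (-ρ * q z) := by
        refine intervalIntegral.integral_mono_interval hs.1.le hst ht.2.le
          (Eventually.of_forall fun z => (exp_pos _).le) (ContinuousOn.intervalIntegrable ?_)
        rw [uIcc_of_le hab.le]
        exact continuous_exp.comp_continuousOn (continuousOn_const.mul hq)

theorem sqrt_pi_div_le_of_intervalIntegral_gaussian_le {ρ C : ℝ} (hρ : 0 < ρ)
    (h : ∀ R ≥ 0, ∫ u in -R..R, exp (-ρ * u ^ 2) ≤ C) : √(π / ρ) ≤ C := by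
  rw [← integral_gaussian]
  exact le_of_tendsto (intervalIntegral_tendsto_integral (integrable_exp_neg_mul_sq hρ)
    tendsto_neg_atTop_atBot tendsto_id) ((eventually_ge_atTop 0).mono h)

theorem nonneg_of_forall_mul_intervalIntegral_gaussian_le {ρ m : ℝ} (hρ : 0 < ρ)
    (h : ∀ R ≥ 0, exp 1 * ρ * ∫ u in -R..R, exp (-ρ * u ^ 2) ≤ exp (ρ * m) * (exp 1 * √(ρ * π))) :
    0 ≤ m := by
  have hsqrt : √(ρ * π) = ρ * √(π / ρ) := by
    rw [show ρ * π = ρ ^ 2 * (π / ρ) by field_simp, sqrt_mul (sq_nonneg ρ), sqrt_sq hρ.le]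
  have hgauss : √(π / ρ) ≤ exp (ρ * m) * √(π / ρ) :=
    sqrt_pi_div_le_of_intervalIntegral_gaussian_le hρ fun R hR =>
      le_of_mul_le_mul_left ((h R hR).trans_eq (by rw [hsqrt]; ring)) (by positivity)
  have hexp : 1 ≤ exp (ρ * m) := le_of_mul_le_mul_right (by simpa using hgauss) (by positivity)
  exact nonneg_of_mul_nonneg_right (by simpa using hexp) hρ

theorem stmt9_general (a b : ℝ) (hab : a < b) (Q : ℝ → ℝ)
    (hQ : ContinuousOn Q (Set.Icc a b))
    (m0sq : ℝ) (v₀ : ℝ → ℝ) (hv₀ : ContDiff ℝ 2 v₀)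
    (hode : ∀ z ∈ Set.Icc a b, deriv (deriv v₀) z = (Q z - m0sq) * v₀ z)
    (hbca : v₀ a = 0) (hbcb : v₀ b = 0)
    (hnodeless : ∀ z ∈ Set.Ioo a b, 0 < v₀ z)
    (ρ : ℝ) (hρ : 0 < ρ)
    (hineq : ∫ z in a..b, exp (-ρ * Q z) ≤ exp 1 * Real.sqrt (ρ * π)) :
    0 ≤ m0sq := by
  have hdiff : Differentiable ℝ v₀ := hv₀.differentiable two_ne_zero
  have hriccati : ∀ z ∈ Ioo a b,
      HasDerivAt (logDeriv v₀) (Q z - m0sq - logDeriv v₀ z ^ 2) z := fun z hz => by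
    have h := hasDerivAt_logDeriv hv₀ (hnodeless z hz).ne'
    rwa [hode z (Ioo_subset_Icc_self hz), mul_div_cancel_right₀ _ (hnodeless z hz).ne'] at h
  have hshift : ∫ z in a..b, exp (-ρ * (Q z - m0sq)) =
      exp (ρ * m0sq) * ∫ z in a..b, exp (-ρ * Q z) := by
    rw [← intervalIntegral.integral_const_mul]
    congr 1 with z
    rw [← exp_add]
    ring_nf
  refine nonneg_of_forall_mul_intervalIntegral_gaussian_le hρ fun R hR => ?_
  calc exp 1 * ρ * ∫ u in -R..R, exp (-ρ * u ^ 2)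
      ≤ exp (ρ * m0sq) * ∫ z in a..b, exp (-ρ * Q z) :=
        hshift ▸ mul_intervalIntegral_gaussian_le_of_riccati_of_blowup hab hρ.le hR
          (hQ.sub continuousOn_const) hriccati
          (frequently_lt_logDeriv_nhdsGT (hbca ▸ hv₀.continuous.continuousWithinAt)
            (mem_of_superset (Ioo_mem_nhdsGT hab) hnodeless) (.of_forall hdiff) R)
          (frequently_logDeriv_lt_nhdsLT (hbcb ▸ hv₀.continuous.continuousWithinAt)
            (mem_of_superset (Ioo_mem_nhdsLT hab) hnodeless) (.of_forall hdiff) (-R))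
    _ ≤ exp (ρ * m0sq) * (exp 1 * √(ρ * π)) := by gcongr

/-- Sufficient stability condition: if `m₀²` is the lowest Dirichlet eigenvalue
of `v'' = (Q - m²) v` on `[a,b]`, with a nodeless eigenfunction `v₀ > 0` on
`(a,b)`, and there exists `ρ > 0` with `∫ₐᵇ e^{-ρ Q} dz ≤ e √(ρπ)`, then
`m₀² ≥ 0`. -/
theorem stmt9 (a b : ℝ) (hab : a < b) (Q : ℝ → ℝ)
    (hQ : ContinuousOn Q (Set.Icc a b))
    (m0sq : ℝ) (v₀ : ℝ → ℝ) (hv₀ : ContDiff ℝ 2 v₀)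
    (hode : ∀ z ∈ Set.Icc a b, deriv (deriv v₀) z = (Q z - m0sq) * v₀ z)
    (hbca : v₀ a = 0) (hbcb : v₀ b = 0)
    (hnodeless : ∀ z ∈ Set.Ioo a b, 0 < v₀ z)
    (hlowest : ∀ lam : ℝ, (∃ v : ℝ → ℝ, ContDiff ℝ 2 v ∧
        (∃ z ∈ Set.Icc a b, v z ≠ 0) ∧ v a = 0 ∧ v b = 0 ∧
        ∀ z ∈ Set.Icc a b, deriv (deriv v) z = (Q z - lam) * v z) → m0sq ≤ lam)
    (ρ : ℝ) (hρ : 0 < ρ)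
    (hineq : ∫ z in a..b, exp (-ρ * Q z) ≤ exp 1 * Real.sqrt (ρ * π)) :
    0 ≤ m0sq :=
  stmt9_general a b hab Q hQ m0sq v₀ hv₀ hode hbca hbcb hnodeless ρ hρ hineq
end
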